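/- Let T be a tree on V and F a set of non-tree edges of a graph G. If in the connectivity-domination graph Ĝ (vertex set F ∪ V, edges I ∪ D as below) the induced subgraph Ĝ[F] is connected and every v ∈ V has a neighbor in F, then T_F = ∪_{f∈F} T_f is a tree that dominates V in G, and hence T_F ∪ F is a 2-edge-connected subgraph of G whose vertex set dominates V. -/

import Mathlib

open SimpleGraph
variable {V : Type*}
noncomputable def treeWalk (T : SimpleGraph V) (hT : T.IsTree) (u v : V) : T.Walk u v :=
  (hT.existsUnique_path u v).choose
noncomputable def pathSupport (T : SimpleGraph V) (hT : T.IsTree) (f : V × V) : Set V :=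
  {v | v ∈ (treeWalk T hT f.1 f.2).support}
noncomputable def pathEdges (T : SimpleGraph V) (hT : T.IsTree) (f : V × V) : Set (Sym2 V) :=
  {e | e ∈ (treeWalk T hT f.1 f.2).edges}
noncomputable def unionPaths (T : SimpleGraph V) (hT : T.IsTree) (F : Set (V × V)) : SimpleGraph V :=
  SimpleGraph.fromEdgeSet (⋃ f ∈ F, pathEdges T hT f)
def pairGraph (F : Set (V × V)) : SimpleGraph V :=
  SimpleGraph.fromEdgeSet {e | ∃ f ∈ F, e = s(f.1, f.2)}
def ConnOn (H : SimpleGraph V) : Prop :=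
  H.support.Nonempty ∧ ∀ u ∈ H.support, ∀ v ∈ H.support, H.Reachable u v
def TwoEdgeConnected (H : SimpleGraph V) : Prop :=
  H.support.Nontrivial ∧ (∀ u ∈ H.support, ∀ v ∈ H.support, H.Reachable u v) ∧
    ∀ e ∈ H.edgeSet, ∀ u ∈ H.support, ∀ v ∈ H.support, (H.deleteEdges {e}).Reachable u v

/-- The connectivity-domination graph `Ĝ` on `F ⊕ V`: two elements `f, g ∈ F` are
adjacent iff the tree paths `T_f, T_g` share a vertex, and `f ∈ F` is adjacent to
`v : V` iff `v` lies on `T_f` or is a `G`-neighbor of a vertex of `T_f`. -/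
noncomputable def conDomGraph (G T : SimpleGraph V) (hT : T.IsTree) (F : Set (V × V)) :
    SimpleGraph ((V × V) ⊕ V) :=
  SimpleGraph.fromRel (fun a b =>
    match a, b with
    | Sum.inl f, Sum.inl g => f ∈ F ∧ g ∈ F ∧
        (pathSupport T hT f ∩ pathSupport T hT g).Nonempty
    | Sum.inl f, Sum.inr v => f ∈ F ∧
        (v ∈ pathSupport T hT f ∨ ∃ w ∈ pathSupport T hT f, G.Adj v w)
    | _, _ => False)

/-!
If the tree paths `T_f` and `T_g` meet, the ends of `f` and `g` are joined inside `T_F`; so a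
walk in `Ĝ[F]` becomes a walk in `T_F`, and `T_F` is connected. An edge `f v` of `Ĝ` says
precisely that `v` lies on or next to `T_f ⊆ T_F`, which gives domination. Finally, since `f`
is not a tree edge, `T_f` closed up by `f` is a cycle of `T_F ∪ F`, and every edge of
`T_F ∪ F` lies on such a fundamental cycle; an edge on a cycle is not a bridge, so deleting it
keeps `T_F ∪ F` connected.
-/

namespace SimpleGraph

variable {H : SimpleGraph V}

theorem Reachable.deleteEdges_of_reachable {a b u v : V} (huv : H.Reachable u v)
    (hab : (H.deleteEdges {s(a, b)}).Reachable a b) :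
    (H.deleteEdges {s(a, b)}).Reachable u v := by
  obtain ⟨p⟩ := huv
  induction p with
  | nil => rfl
  | @cons x y _ hxy _ ih =>
    refine Reachable.trans ?_ ih
    by_cases he : s(x, y) = s(a, b)
    · rcases Sym2.eq_iff.mp he with ⟨rfl, rfl⟩ | ⟨rfl, rfl⟩
      exacts [hab, hab.symm]
    · exact (deleteEdges_adj.mpr ⟨hxy, he⟩).reachable

theorem Reachable.deleteEdges_of_mem_isCycle {e : Sym2 V} {w : V} {c : H.Walk w w}
    (hc : c.IsCycle) (he : e ∈ c.edges) {u v : V} (huv : H.Reachable u v) :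
    (H.deleteEdges {e}).Reachable u v := by
  induction e with
  | h a b =>
    exact huv.deleteEdges_of_reachable
      (adj_and_reachable_delete_edges_iff_exists_cycle.mpr ⟨w, c, hc, he⟩).2

theorem support_nontrivial_of_nonempty (h : H.support.Nonempty) : H.support.Nontrivial := by
  obtain ⟨v, w, hvw⟩ := h
  exact ⟨v, hvw.left_mem_support, w, hvw.right_mem_support, hvw.ne⟩

end SimpleGraph

open SimpleGraph

def Dominates (G : SimpleGraph V) (S : Set V) : Prop :=
  ∀ v, v ∈ S ∨ ∃ u ∈ S, G.Adj v u

theorem Dominates.mono {G : SimpleGraph V} {S S' : Set V} (h : Dominates G S) (hS : S ⊆ S') :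
    Dominates G S' := fun v =>
  (h v).imp (@hS v) fun ⟨u, hu, hvu⟩ => ⟨u, hS hu, hvu⟩

theorem ConnOn.mono {H₁ H₂ : SimpleGraph V} (h : ConnOn H₁) (hle : H₁ ≤ H₂)
    (hsupp : H₂.support ⊆ H₁.support) : ConnOn H₂ :=
  ⟨h.1.mono (support_mono hle), fun u hu v hv => (h.2 u (hsupp hu) v (hsupp hv)).mono hle⟩

theorem twoEdgeConnected_of_forall_mem_isCycle {H : SimpleGraph V} (hconn : ConnOn H)
    (hcyc : ∀ e ∈ H.edgeSet, ∃ (w : V) (c : H.Walk w w), c.IsCycle ∧ e ∈ c.edges) :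
    TwoEdgeConnected H := by
  refine ⟨support_nontrivial_of_nonempty hconn.1, hconn.2, fun e he u hu v hv => ?_⟩
  obtain ⟨w, c, hc, hec⟩ := hcyc e he
  exact (hconn.2 u hu v hv).deleteEdges_of_mem_isCycle hc hec

section TreePathUnion

variable {G T : SimpleGraph V} {hT : T.IsTree} {F : Set (V × V)}

theorem treeWalk_isPath (u v : V) : (treeWalk T hT u v).IsPath :=
  (hT.existsUnique_path u v).choose_spec.1

theorem pathEdges_subset_edgeSet (f : V × V) : pathEdges T hT f ⊆ T.edgeSet :=
  fun _ he => (treeWalk T hT f.1 f.2).edges_subset_edgeSet he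

theorem fst_mem_pathSupport (f : V × V) : f.1 ∈ pathSupport T hT f :=
  (treeWalk T hT f.1 f.2).start_mem_support

theorem snd_mem_pathSupport (f : V × V) : f.2 ∈ pathSupport T hT f :=
  (treeWalk T hT f.1 f.2).end_mem_support

theorem mem_edgeSet_unionPaths {e : Sym2 V} :
    e ∈ (unionPaths T hT F).edgeSet ↔ ∃ f ∈ F, e ∈ pathEdges T hT f := by
  rw [unionPaths, edgeSet_fromEdgeSet, Set.mem_sdiff, Set.mem_iUnion₂]
  simp only [exists_prop, and_iff_left_iff_imp, forall_exists_index, and_imp]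
  exact fun f _ he => T.not_isDiag_of_mem_edgeSet (pathEdges_subset_edgeSet f he)

theorem unionPaths_le : unionPaths T hT F ≤ T := by
  rw [← edgeSet_subset_edgeSet]
  intro e he
  obtain ⟨f, -, hef⟩ := mem_edgeSet_unionPaths.mp he
  exact pathEdges_subset_edgeSet f hef

theorem pathSupport_subset_support_unionPaths {f : V × V} (hf : f ∈ F) (hne : f.1 ≠ f.2) :
    pathSupport T hT f ⊆ (unionPaths T hT F).support := by
  intro v hv
  obtain ⟨e, hep, hve⟩ :=
    (Walk.mem_support_iff_exists_mem_edges_of_not_nil (Walk.not_nil_of_ne hne)).mp hv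
  obtain ⟨w, rfl⟩ := Sym2.mem_iff_exists.mp hve
  exact (mem_support _).mpr ⟨w, mem_edgeSet_unionPaths.mpr ⟨f, hf, hep⟩⟩

theorem exists_mem_pathSupport_of_mem_support {v : V} (hv : v ∈ (unionPaths T hT F).support) :
    ∃ f ∈ F, v ∈ pathSupport T hT f := by
  obtain ⟨w, hvw⟩ := (mem_support _).mp hv
  obtain ⟨f, hf, hef⟩ := mem_edgeSet_unionPaths.mp ((mem_edgeSet _).mpr hvw)
  exact ⟨f, hf, (treeWalk T hT f.1 f.2).fst_mem_support_of_mem_edges hef⟩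

theorem reachable_unionPaths_of_mem_pathSupport {f : V × V} (hf : f ∈ F) {u v : V}
    (hu : u ∈ pathSupport T hT f) (hv : v ∈ pathSupport T hT f) :
    (unionPaths T hT F).Reachable u v := by
  classical
  let p := (treeWalk T hT f.1 f.2).transfer (unionPaths T hT F)
    fun _ he => mem_edgeSet_unionPaths.mpr ⟨f, hf, he⟩
  have hu' : u ∈ p.support := by rwa [Walk.support_transfer]
  have hv' : v ∈ p.support := by rwa [Walk.support_transfer]
  exact (p.takeUntil u hu').reachable.symm.trans (p.takeUntil v hv').reachable

theorem reachable_unionPaths_of_inter_nonempty {f g : V × V} (hf : f ∈ F) (hg : g ∈ F)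
    (h : (pathSupport T hT f ∩ pathSupport T hT g).Nonempty) :
    (unionPaths T hT F).Reachable f.1 g.1 := by
  obtain ⟨x, hxf, hxg⟩ := h
  exact (reachable_unionPaths_of_mem_pathSupport hf (fst_mem_pathSupport f) hxf).trans
    (reachable_unionPaths_of_mem_pathSupport hg hxg (fst_mem_pathSupport g))

theorem conDomGraph_adj_inl_inl {f g : V × V} :
    (conDomGraph G T hT F).Adj (.inl f) (.inl g) ↔
      f ≠ g ∧ f ∈ F ∧ g ∈ F ∧ (pathSupport T hT f ∩ pathSupport T hT g).Nonempty := by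
  simp only [conDomGraph, fromRel_adj, ne_eq, Sum.inl.injEq, Set.inter_comm (pathSupport T hT g)]
  tauto

theorem conDomGraph_adj_inl_inr {f : V × V} {v : V} :
    (conDomGraph G T hT F).Adj (.inl f) (.inr v) ↔
      f ∈ F ∧ (v ∈ pathSupport T hT f ∨ ∃ w ∈ pathSupport T hT f, G.Adj v w) := by
  simp [conDomGraph, fromRel_adj]

theorem reachable_unionPaths_of_connected_induce
    (hconn : ((conDomGraph G T hT F).induce (Sum.inl '' F)).Connected)
    {f g : V × V} (hf : f ∈ F) (hg : g ∈ F) : (unionPaths T hT F).Reachable f.1 g.1 := by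
  let src : (Sum.inl '' F : Set ((V × V) ⊕ V)) → V := fun a => Sum.elim Prod.fst id a.1
  have hstep : ∀ a b, ((conDomGraph G T hT F).induce (Sum.inl '' F)).Adj a b →
      Relation.ReflTransGen (unionPaths T hT F).Adj (src a) (src b) := by
    rintro ⟨_, f', hf', rfl⟩ ⟨_, g', hg', rfl⟩ hadj
    rw [← reachable_iff_reflTransGen]
    exact reachable_unionPaths_of_inter_nonempty hf' hg'
      ((conDomGraph_adj_inl_inl (G := G)).mp hadj).2.2.2
  have h := (reachable_iff_reflTransGen _ _).mp
    (hconn.preconnected ⟨_, f, hf, rfl⟩ ⟨_, g, hg, rfl⟩)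
  exact (reachable_iff_reflTransGen _ _).mpr (Relation.ReflTransGen.lift' src hstep _ _ h)

theorem connOn_unionPaths (hne : ∀ f ∈ F, f.1 ≠ f.2)
    (hconn : ((conDomGraph G T hT F).induce (Sum.inl '' F)).Connected) :
    ConnOn (unionPaths T hT F) := by
  obtain ⟨⟨_, f, hf, rfl⟩⟩ := hconn.nonempty
  refine ⟨⟨f.1, pathSupport_subset_support_unionPaths hf (hne f hf) (fst_mem_pathSupport f)⟩,
    fun u hu v hv => ?_⟩
  obtain ⟨g, hg, hug⟩ := exists_mem_pathSupport_of_mem_support hu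
  obtain ⟨h, hh, hvh⟩ := exists_mem_pathSupport_of_mem_support hv
  exact (reachable_unionPaths_of_mem_pathSupport hg hug (fst_mem_pathSupport g)).trans <|
    (reachable_unionPaths_of_connected_induce hconn hg hh).trans <|
      reachable_unionPaths_of_mem_pathSupport hh (fst_mem_pathSupport h) hvh

theorem dominates_unionPaths (hne : ∀ f ∈ F, f.1 ≠ f.2)
    (hdom : ∀ v : V, ∃ f ∈ F, (conDomGraph G T hT F).Adj (.inl f) (.inr v)) :
    Dominates G (unionPaths T hT F).support := by
  intro v
  obtain ⟨f, hf, hadj⟩ := hdom v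
  obtain ⟨-, hvf⟩ := conDomGraph_adj_inl_inr.mp hadj
  have hsub := pathSupport_subset_support_unionPaths (hT := hT) hf (hne f hf)
  exact hvf.imp (@hsub v) fun ⟨w, hw, hvw⟩ => ⟨w, hsub hw, hvw⟩

theorem pairGraph_le (hG : ∀ f ∈ F, G.Adj f.1 f.2) : pairGraph F ≤ G := by
  rintro u v ⟨⟨f, hf, huv⟩, -⟩
  rcases Sym2.eq_iff.mp huv with ⟨rfl, rfl⟩ | ⟨rfl, rfl⟩
  exacts [hG f hf, (hG f hf).symm]

theorem support_sup_pairGraph_subset (hne : ∀ f ∈ F, f.1 ≠ f.2) :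
    (unionPaths T hT F ⊔ pairGraph F).support ⊆ (unionPaths T hT F).support := by
  rintro v ⟨w, hvw | ⟨⟨f, hf, hvwf⟩, -⟩⟩
  · exact (mem_support _).mpr ⟨w, hvw⟩
  · have hv : v = f.1 ∨ v = f.2 := by
      rcases Sym2.eq_iff.mp hvwf with ⟨rfl, -⟩ | ⟨rfl, -⟩ <;> simp
    have hsub := pathSupport_subset_support_unionPaths (hT := hT) hf (hne f hf)
    rcases hv with rfl | rfl
    exacts [hsub (fst_mem_pathSupport f), hsub (snd_mem_pathSupport f)]

theorem exists_isCycle_edges_eq_insert_pathEdges {f : V × V} (hf : f ∈ F)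
    (hfT : ¬ T.Adj f.1 f.2) (hne : f.1 ≠ f.2) :
    ∃ c : (unionPaths T hT F ⊔ pairGraph F).Walk f.2 f.2, c.IsCycle ∧
      {e | e ∈ c.edges} = insert s(f.1, f.2) (pathEdges T hT f) := by
  have hchord : (unionPaths T hT F ⊔ pairGraph F).Adj f.2 f.1 :=
    Or.inr ⟨⟨f, hf, Sym2.eq_swap⟩, hne.symm⟩
  let p := (treeWalk T hT f.1 f.2).transfer (unionPaths T hT F ⊔ pairGraph F) fun _ he =>
    edgeSet_mono le_sup_left (mem_edgeSet_unionPaths.mpr ⟨f, hf, he⟩)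
  have hchord_notMem : s(f.2, f.1) ∉ p.edges := by
    rw [Walk.edges_transfer]
    exact fun h => hfT (T.mem_edgeSet.mp (pathEdges_subset_edgeSet f h)).symm
  refine ⟨.cons hchord p, (Walk.cons_isCycle_iff p hchord).mpr
    ⟨(treeWalk_isPath _ _).transfer _, hchord_notMem⟩, ?_⟩
  ext e
  simp [p, Walk.edges_transfer, pathEdges, Sym2.eq_swap]

theorem exists_mem_insert_pathEdges_of_mem_edgeSet {e : Sym2 V}
    (he : e ∈ (unionPaths T hT F ⊔ pairGraph F).edgeSet) :
    ∃ f ∈ F, e ∈ insert s(f.1, f.2) (pathEdges T hT f) := by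
  rw [edgeSet_sup, pairGraph, edgeSet_fromEdgeSet] at he
  rcases he with heU | ⟨⟨f, hf, rfl⟩, -⟩
  · obtain ⟨f, hf, hef⟩ := mem_edgeSet_unionPaths.mp heU
    exact ⟨f, hf, Or.inr hef⟩
  · exact ⟨f, hf, Or.inl rfl⟩

theorem twoEdgeConnected_sup_pairGraph (hne : ∀ f ∈ F, f.1 ≠ f.2)
    (hFT : ∀ f ∈ F, ¬ T.Adj f.1 f.2) (hconn : ConnOn (unionPaths T hT F)) :
    TwoEdgeConnected (unionPaths T hT F ⊔ pairGraph F) := by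
  refine twoEdgeConnected_of_forall_mem_isCycle
    (hconn.mono le_sup_left (support_sup_pairGraph_subset hne)) fun e he => ?_
  obtain ⟨f, hf, hef⟩ := exists_mem_insert_pathEdges_of_mem_edgeSet he
  obtain ⟨c, hc, hcedges⟩ := exists_isCycle_edges_eq_insert_pathEdges hf (hFT f hf) (hne f hf)
  exact ⟨f.2, c, hc, show e ∈ {e | e ∈ c.edges} from hcedges ▸ hef⟩

end TreePathUnion

/-- Converse direction of the reduction: if in the connectivity-domination graph `Ĝ[F]`
is connected and every `v ∈ V` has a neighbor in `F`, then `T_F` is a tree dominating `V`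
in `G`, and hence `T_F ∪ F` is a 2-edge-connected subgraph of `G` whose vertex set
dominates `V`. -/
theorem stmt19 (G T : SimpleGraph V) (hle : T ≤ G) (hT : T.IsTree)
    (F : Set (V × V)) (hF : ∀ f ∈ F, G.Adj f.1 f.2 ∧ ¬ T.Adj f.1 f.2)
    (hconn : ((conDomGraph G T hT F).induce (Sum.inl '' F)).Connected)
    (hdom : ∀ v : V, ∃ f ∈ F, (conDomGraph G T hT F).Adj (Sum.inl f) (Sum.inr v)) :
    ConnOn (unionPaths T hT F) ∧
      (∀ v : V, v ∈ (unionPaths T hT F).support ∨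
        ∃ u ∈ (unionPaths T hT F).support, G.Adj v u) ∧
      TwoEdgeConnected (unionPaths T hT F ⊔ pairGraph F) ∧
      (unionPaths T hT F ⊔ pairGraph F) ≤ G ∧
      ∀ v : V, v ∈ (unionPaths T hT F ⊔ pairGraph F).support ∨
        ∃ u ∈ (unionPaths T hT F ⊔ pairGraph F).support, G.Adj v u := by
  have hne : ∀ f ∈ F, f.1 ≠ f.2 := fun f hf => (hF f hf).1.ne
  have hU : ConnOn (unionPaths T hT F) := connOn_unionPaths hne hconn
  have hdomU : Dominates G (unionPaths T hT F).support := dominates_unionPaths hne hdom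
  exact ⟨hU, hdomU, twoEdgeConnected_sup_pairGraph hne (fun f hf => (hF f hf).2) hU,
    sup_le (unionPaths_le.trans hle) (pairGraph_le fun f hf => (hF f hf).1),
    hdomU.mono (support_mono le_sup_left)⟩
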